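/- arXiv:2412.08130 — 4 statements merged into one kernel-verified Lean document; each statement's English description precedes it below -/
import Mathlib

section
/- Let X be a metric space with the property that for every R > 0 the supremum over x ∈ X of the cardinality of the closed ball B(x,R) is finite (uniform local finiteness). Let f : X → X satisfy sup_{p ∈ X} d(p, f(p)) < ∞, and let U be an ultrafilter on X. Then there exists a set Y ∈ U such that the restriction of f to Y is injective. -/
/-- In a uniformly locally finite metric space, a map moving points a
uniformly bounded distance is injective on some set of any given ultrafilter. -/
theorem exists_mem_ultrafilter_injOn {X : Type*} [MetricSpace X]
    (hULF : ∀ R : ℝ, 0 < R → ∃ N : ℕ, ∀ x : X,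
      (Metric.closedBall x R).Finite ∧ (Metric.closedBall x R).ncard ≤ N)
    (f : X → X) (hf : ∃ C : ℝ, ∀ p : X, dist p (f p) ≤ C)
    (U : Ultrafilter X) :
    ∃ Y ∈ U, Set.InjOn f Y := by
  obtain ⟨C, hC⟩ := hf
  obtain ⟨N, hN⟩ := hULF (2 * max C 0 + 1) (by positivity)
  letI : LinearOrder X := IsWellOrder.linearOrder WellOrderingRel
  have hfib : ∀ x : X, {y | f y = f x} ⊆ Metric.closedBall x (2 * max C 0 + 1) := by
    intro x y hy
    simp only [Metric.mem_closedBall]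
    calc dist y x ≤ dist y (f y) + dist (f y) x := dist_triangle ..
      _ = dist y (f y) + dist (f x) x := by rw [hy]
      _ ≤ max C 0 + max C 0 := by
          gcongr
          · exact (hC y).trans (le_max_left _ _)
          · rw [dist_comm]; exact (hC x).trans (le_max_left _ _)
      _ ≤ 2 * max C 0 + 1 := by linarith
  set g : X → ℕ := fun x => {y | f y = f x ∧ y < x}.ncard with hg
  have hfin : ∀ x : X, {y | f y = f x}.Finite := fun x => (hN x).1.subset (hfib x)
  have hgN : ∀ x, g x ≤ N := by
    intro x
    calc g x ≤ (Metric.closedBall x (2 * max C 0 + 1)).ncard :=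
          Set.ncard_le_ncard (fun y hy => hfib x hy.1) (hN x).1
      _ ≤ N := (hN x).2
  have hcover : (⋃ i ∈ Set.Iic N, {x | g x = i}) ∈ U := by
    have : (⋃ i ∈ Set.Iic N, {x | g x = i}) = Set.univ := by
      ext x
      simp only [Set.mem_iUnion, Set.mem_univ, iff_true, Set.mem_Iic,
        Set.mem_setOf_eq]
      exact ⟨g x, hgN x, rfl⟩
    rw [this]; exact Filter.univ_mem
  rw [Ultrafilter.finite_biUnion_mem_iff (Set.finite_Iic N)] at hcover
  obtain ⟨i, _, hi⟩ := hcover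
  refine ⟨{x | g x = i}, hi, ?_⟩
  intro x hx y hy hxy
  by_contra hne
  wlog hlt : x < y generalizing x y
  · exact this hy hx hxy.symm (Ne.symm hne)
      (lt_of_le_of_ne (not_lt.1 hlt) (Ne.symm hne))
  have hsub : {z | f z = f x ∧ z < x} ⊂ {z | f z = f y ∧ z < y} := by
    constructor
    · intro z hz
      exact ⟨hz.1.trans hxy, hz.2.trans hlt⟩
    · intro h
      have hx' : x ∈ {z | f z = f x ∧ z < x} := h ⟨hxy, hlt⟩
      exact lt_irrefl x hx'.2
  have hlt' := Set.ncard_lt_ncard hsub ((hfin y).subset (fun z hz => hz.1))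
  have hgx : g x = i := hx
  have hgy : g y = i := hy
  rw [show {z | f z = f x ∧ z < x}.ncard = g x from rfl,
    show {z | f z = f y ∧ z < y}.ncard = g y from rfl, hgx, hgy] at hlt'
  exact lt_irrefl i hlt'
end

section
/- Let U be an ultrafilter on a set S and f : S → S a function whose pushforward ultrafilter f_*(U) = {A ⊆ S : f⁻¹(A) ∈ U} equals U. Then there exists Y ∈ U such that f restricted to Y is the identity map on Y. -/
/-!
A coloring `c` of `S` with finitely many colors pushes `U` forward to a principal ultrafilter,
so `f_*U = U` forces `c (f x) = c x` for `U`-almost every `x`. It therefore suffices to color `S`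
with finitely many colors so that `c (f x) ≠ c x` whenever `f x ≠ x`, and this is done one grand
orbit (`x ~ y` iff `f^[m] x = f^[n] y` for some `m n`) at a time. If the grand orbit contains a
cycle, fix a base point `b` on it: every `x` reaches `b`, and the parity of the number of steps
from `x` to `b` flips along `f` except at `b` itself. Otherwise fix any `r` in it: the offset
`n - m` for which `f^[m] x = f^[n] r` is well defined and grows by one along `f`.
-/

open Function

theorem Ultrafilter.eventually_apply_eq_of_map_eq {S β : Type*} [Finite β] {U : Ultrafilter S}
    {f : S → S} (h : U.map f = U) (c : S → β) : ∀ᶠ x in U, c (f x) = c x := by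
  obtain ⟨b, hb⟩ := (U.map c).eq_pure_of_finite
  have hc : ∀ᶠ x in U, c x = b := Ultrafilter.mem_map.1 (hb ▸ rfl : {b} ∈ U.map c)
  have hcf : ∀ᶠ x in U, c (f x) = b := by rw [← h] at hc; exact hc
  filter_upwards [hc, hcf] with x h₁ h₂ using h₂.trans h₁.symm

namespace Function

variable {S : Type*} (f : S → S)

def SameGrandOrbit (x y : S) : Prop := ∃ m n : ℕ, f^[m] x = f^[n] y

noncomputable def grandOrbitChoose (p : S → Prop) (x : S) : S :=
  haveI : Nonempty S := ⟨x⟩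
  Classical.epsilon fun y => SameGrandOrbit f x y ∧ p y

open Classical in
noncomputable def stepsTo (x y : S) : ℕ :=
  if h : ∃ n, f^[n] x = y then Nat.find h else 0

/-- Meaningful only when `x` has no periodic iterate, see `iterateOffset_eq`. -/
noncomputable def iterateOffset (x y : S) : ℤ :=
  Classical.epsilon fun d : ℤ => ∃ m n : ℕ, f^[m] x = f^[n] y ∧ d = n - m

variable {f}

theorem iterate_apply_eq_iterate_succ {x y : S} {m n : ℕ} (h : f^[m] x = f^[n] y) :
    f^[m] (f x) = f^[n + 1] y := by
  rw [iterate_succ_apply', ← h]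
  exact (Commute.iterate_self f m).eq x

theorem sameGrandOrbit_apply_left {x y : S} : SameGrandOrbit f (f x) y ↔ SameGrandOrbit f x y :=
  ⟨fun ⟨m, n, h⟩ => ⟨m + 1, n, h⟩, fun ⟨m, n, h⟩ => ⟨m, n + 1, iterate_apply_eq_iterate_succ h⟩⟩

theorem grandOrbitChoose_apply (p : S → Prop) (x : S) :
    grandOrbitChoose f p (f x) = grandOrbitChoose f p x := by
  simp only [grandOrbitChoose, sameGrandOrbit_apply_left]

theorem grandOrbitChoose_spec {p : S → Prop} {x y : S} (hxy : SameGrandOrbit f x y) (hy : p y) :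
    SameGrandOrbit f x (grandOrbitChoose f p x) ∧ p (grandOrbitChoose f p x) :=
  Classical.epsilon_spec (p := fun z => SameGrandOrbit f x z ∧ p z) ⟨y, hxy, hy⟩

theorem exists_iterate_eq_of_iterate_eq_iterate {x y : S} {m n : ℕ} (hy : y ∈ periodicPts f)
    (h : f^[m] x = f^[n] y) : ∃ k, f^[k] x = y := by
  -- after `m` steps `x` reaches `f^[n] y`, which returns to `y` after `minimalPeriod f y * n - n`
  refine ⟨minimalPeriod f y * n - n + m, ?_⟩
  rw [iterate_add_apply, h, ← iterate_add_apply,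
    Nat.sub_add_cancel (Nat.le_mul_of_pos_left n (minimalPeriod_pos_of_mem_periodicPts hy))]
  exact (isPeriodicPt_minimalPeriod f y).mul_const n

theorem exists_iterate_eq_grandOrbitChoose_periodicPts {x : S}
    (hx : ∃ n, f^[n] x ∈ periodicPts f) :
    ∃ k, f^[k] x = grandOrbitChoose f (· ∈ periodicPts f) x := by
  obtain ⟨n, hn⟩ := hx
  obtain ⟨⟨i, j, hij⟩, hper⟩ := grandOrbitChoose_spec (p := (· ∈ periodicPts f)) ⟨n, 0, rfl⟩ hn
  exact exists_iterate_eq_of_iterate_eq_iterate hper hij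

open Classical in
theorem stepsTo_apply_add_one {x y : S} (hxy : x ≠ y) (h : ∃ n, f^[n] x = y) :
    stepsTo f (f x) y + 1 = stepsTo f x y := by
  have h' : ∃ n, f^[n] (f x) = y := by
    obtain ⟨_ | n, hn⟩ := h
    · exact absurd hn hxy
    · exact ⟨n, hn⟩
  rw [stepsTo, stepsTo, dif_pos h, dif_pos h']
  exact (Nat.find_comp_succ h h' hxy).symm

theorem iterate_injective_of_forall_notMem_periodicPts {x : S}
    (hx : ∀ n, f^[n] x ∉ periodicPts f) : Injective fun n => f^[n] x := by
  intro a b hab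
  by_contra hne
  wlog hlt : a < b generalizing a b
  · exact this hab.symm (Ne.symm hne) (by omega)
  refine hx a (mk_mem_periodicPts (Nat.sub_pos_of_lt hlt) ?_)
  change f^[b - a] (f^[a] x) = f^[a] x
  rw [← iterate_add_apply, Nat.sub_add_cancel hlt.le]
  exact hab.symm

theorem add_eq_add_of_iterate_eq_iterate {x y : S} {m₁ n₁ m₂ n₂ : ℕ}
    (hx : ∀ n, f^[n] x ∉ periodicPts f) (h₁ : f^[m₁] x = f^[n₁] y) (h₂ : f^[m₂] x = f^[n₂] y) :
    n₂ + m₁ = n₁ + m₂ := by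
  refine iterate_injective_of_forall_notMem_periodicPts hx ?_
  change f^[n₂ + m₁] x = f^[n₁ + m₂] x
  rw [iterate_add_apply, iterate_add_apply, h₁, h₂, ← iterate_add_apply, ← iterate_add_apply,
    add_comm]

theorem iterateOffset_eq {x y : S} {m n : ℕ} (hx : ∀ k, f^[k] x ∉ periodicPts f)
    (h : f^[m] x = f^[n] y) : iterateOffset f x y = n - m := by
  obtain ⟨m', n', h', hd⟩ : ∃ m' n' : ℕ, f^[m'] x = f^[n'] y ∧ iterateOffset f x y = n' - m' :=
    Classical.epsilon_spec (p := fun d : ℤ => ∃ m n : ℕ, f^[m] x = f^[n] y ∧ d = n - m)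
      ⟨n - m, m, n, h, rfl⟩
  have := add_eq_add_of_iterate_eq_iterate hx h h'
  omega

theorem iterateOffset_apply {x y : S} (hx : ∀ k, f^[k] x ∉ periodicPts f)
    (hxy : SameGrandOrbit f x y) : iterateOffset f (f x) y = iterateOffset f x y + 1 := by
  obtain ⟨m, n, h⟩ := hxy
  rw [iterateOffset_eq hx h,
    iterateOffset_eq (fun k => hx (k + 1)) (iterate_apply_eq_iterate_succ h)]
  push_cast
  ring

theorem exists_coloring_apply_ne (f : S → S) :
    ∃ c : S → Bool × Bool × Bool, ∀ x, f x ≠ x → c (f x) ≠ c x := by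
  classical
  refine ⟨fun x => (x = grandOrbitChoose f (· ∈ periodicPts f) x,
    Even (stepsTo f x (grandOrbitChoose f (· ∈ periodicPts f) x)),
    Even (iterateOffset f x (grandOrbitChoose f (fun _ => True) x))), fun x hfx => ?_⟩
  simp only [grandOrbitChoose_apply, ne_eq, Prod.mk.injEq, decide_eq_decide]
  set base := grandOrbitChoose f (· ∈ periodicPts f) x
  set root := grandOrbitChoose f (fun _ => True) x
  rintro ⟨h_base, h_steps, h_offset⟩
  by_cases hx : ∃ n, f^[n] x ∈ periodicPts f
  · by_cases hxb : x = base
    · exact hfx ((h_base.2 hxb).trans hxb.symm)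
    · rw [← stepsTo_apply_add_one hxb (exists_iterate_eq_grandOrbitChoose_periodicPts hx),
        Nat.even_add_one] at h_steps
      exact iff_not_self h_steps
  · push Not at hx
    have hxr : SameGrandOrbit f x root := (grandOrbitChoose_spec ⟨0, 0, rfl⟩ trivial).1
    rw [iterateOffset_apply hx hxr, Int.even_add_one] at h_offset
    exact iff_not_self h_offset.symm

end Function

/-- If the pushforward of an ultrafilter U under f equals U, then
f is the identity on some set of U. -/
theorem eq_id_of_map_eq_self {S : Type*} (U : Ultrafilter S) (f : S → S)
    (h : Ultrafilter.map f U = U) :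
    ∃ Y ∈ U, ∀ y ∈ Y, f y = y := by
  obtain ⟨c, hc⟩ := exists_coloring_apply_ne f
  refine ⟨{x | f x = x}, ?_, fun y hy => hy⟩
  filter_upwards [U.eventually_apply_eq_of_map_eq h c] with x hx
  exact not_imp_not.1 (hc x) hx
end

section
/- Let (X,d) be a uniformly locally finite metric space and ω an ultrafilter on I. Then every galaxy G of X^ω with the pseudo-metric st∘d^ω is uniformly locally finite, with the same bounds: for every real R > 0 and every real R' > R, every ball of radius R in G has cardinality at most sup_{x∈X} #B(x,R'). -/
open Filter

/-- Galaxies of the ultrapower of a uniformly locally finite metric space are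
uniformly locally finite with the same bounds: for R' > R > 0, if every closed ball of
radius R' in X has at most N points, then every ball of radius R in a galaxy
(for the standard-part pseudo-metric) has at most N points. -/
theorem galaxy_uniformly_locally_finite {X I : Type*} [MetricSpace X] (ω : Ultrafilter I)
    (R R' : ℝ) (hR : 0 < R) (hRR' : R < R') (N : ℕ)
    (hN : ∀ x : X, (Metric.closedBall x R').Finite ∧ (Metric.closedBall x R').ncard ≤ N)
    (G : Set ((ω : Filter I).Germ X))
    (hG : ∀ x ∈ G, ∀ y ∈ G, ∃ c : ℝ,
      Filter.Germ.map₂ dist x y ≤ ((fun _ => c : I → ℝ) : (ω : Filter I).Germ ℝ))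
    (ρ : (ω : Filter I).Germ X → (ω : Filter I).Germ X → ℝ)
    (hρ : ∀ x y : I → X, (∃ c : ℝ, ∀ᶠ i in (ω : Filter I), dist (x i) (y i) ≤ c) →
      Filter.Tendsto (fun i => dist (x i) (y i)) (ω : Filter I)
        (nhds (ρ (x : (ω : Filter I).Germ X) (y : (ω : Filter I).Germ X)))) :
    ∀ x ∈ G, ({y ∈ G | ρ x y ≤ R}).Finite ∧ ({y ∈ G | ρ x y ≤ R}).ncard ≤ N := by
  intro x hx
  set S : Set ((ω : Filter I).Germ X) := {y ∈ G | ρ x y ≤ R} with hS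
  -- representative of x
  obtain ⟨g, hg⟩ : ∃ g : I → X, (g : (ω : Filter I).Germ X) = x := ⟨Quotient.out x, Quotient.out_eq' x⟩
  -- representative function for germs
  set F : (ω : Filter I).Germ X → (I → X) := fun y => Quotient.out y with hF
  have hFrep : ∀ y : (ω : Filter I).Germ X, ((F y : I → X) : (ω : Filter I).Germ X) = y :=
    fun y => Quotient.out_eq' y
  -- key: every y ∈ S has eventually dist (g i) (F y i) < R'
  have key : ∀ y ∈ S, ∀ᶠ i in (ω : Filter I), dist (g i) (F y i) < R' := by
    intro y hy
    obtain ⟨hyG, hyR⟩ := hy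
    obtain ⟨c, hc⟩ := hG x hx y hyG
    rw [← hg, ← hFrep y] at hc
    have hc' : ∀ᶠ i in (ω : Filter I), dist (g i) (F y i) ≤ c := by
      rw [Filter.Germ.map₂_coe] at hc
      exact Filter.Germ.coe_le.mp hc
    have htend := hρ g (F y) ⟨c, hc'⟩
    rw [hg, hFrep y] at htend
    have : ρ x y < R' := lt_of_le_of_lt hyR hRR'
    exact htend.eventually_lt_const this
  -- every finset inside S has card ≤ N
  have bdd : ∀ T : Finset ((ω : Filter I).Germ X), ↑T ⊆ S → T.card ≤ N := by
    intro T hT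
    by_contra hcard
    push_neg at hcard
    have hev : ∀ᶠ i in (ω : Filter I), ∀ y ∈ (↑T : Set _), dist (g i) (F y i) < R' :=
      (eventually_all_finite T.finite_toSet).mpr fun y hy => key y (hT hy)
    -- pairs
    classical
    set P : Finset ((ω : Filter I).Germ X × (ω : Filter I).Germ X) :=
      (T ×ˢ T).filter (fun p => p.1 ≠ p.2) with hP
    have hpair : ∀ᶠ i in (ω : Filter I), ∃ p ∈ P, F p.1 i = F p.2 i := by
      filter_upwards [hev] with i hi
      have hfin := (hN (g i)).1
      have hmaps : ∀ y ∈ T, F y i ∈ hfin.toFinset := by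
        intro y hy
        rw [Set.Finite.mem_toFinset]
        exact Metric.mem_closedBall.mpr (by
          rw [dist_comm]; exact le_of_lt (hi y hy))
      have hlt : hfin.toFinset.card < T.card := by
        have : hfin.toFinset.card ≤ N := by
          rw [← Set.ncard_eq_toFinset_card _ hfin]; exact (hN (g i)).2
        omega
      obtain ⟨y, hy, z, hz, hne, heq⟩ :=
        Finset.exists_ne_map_eq_of_card_lt_of_maps_to hlt hmaps
      exact ⟨(y, z), by rw [hP]; exact Finset.mem_filter.mpr ⟨Finset.mem_product.mpr ⟨hy, hz⟩, hne⟩, heq⟩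
    -- ultrafilter: one pair works eventually
    have hmem : (⋃ p ∈ (↑P : Set ((ω : Filter I).Germ X × (ω : Filter I).Germ X)), {i | F p.1 i = F p.2 i}) ∈ (ω : Filter I) := by
      filter_upwards [hpair] with i hi
      obtain ⟨p, hp, hpe⟩ := hi
      exact Set.mem_biUnion hp hpe
    obtain ⟨p, hpP, hpω⟩ := (Ultrafilter.finite_biUnion_mem_iff P.finite_toSet).mp hmem
    have : p.1 = p.2 := by
      rw [← hFrep p.1, ← hFrep p.2]
      exact Filter.Germ.coe_eq.mpr hpω
    exact (Finset.mem_filter.mp hpP).2 this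
  -- conclude
  have hfin : S.Finite := by
    by_contra hinf
    obtain ⟨T, hTS, hTcard⟩ := Set.Infinite.exists_subset_card_eq hinf (N + 1)
    have := bdd T hTS
    omega
  refine ⟨hfin, ?_⟩
  have := bdd hfin.toFinset (by simp)
  rwa [← Set.ncard_eq_toFinset_card _ hfin] at this
end

section
/- Let (X,d) be a uniformly locally finite metric space and T a bounded operator on ℓ²(X) with finite propagation, say propagation at most R (meaning ⟨δ_x, T δ_y⟩ = 0 whenever d(x,y) > R). Then for any ultrafilter ω and any galaxy G of X^ω, the operator T_G on ℓ²(G) with kernel k_{T_G}([x_i],[y_i]) = lim_{i→ω} ⟨δ_{x_i}, T δ_{y_i}⟩ is a well-defined bounded operator with propagation at most R with respect to the pseudo-metric st∘d^ω. -/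
/-
Finitely many distinct points of the ultrapower have representatives that are `ω`-almost surely
distinct, so every finite section of the limit kernel is an `ω`-limit of finite sections of the
kernel of `T`, and inherits the estimate `‖∑ conj (a x) * k x y * b y‖ ≤ ‖T‖ ‖a‖ ‖b‖`. That
estimate on finitely supported vectors alone yields a bounded operator on `ℓ²(G)` with the given
kernel: the rows lie in `ℓ²`, and pairing them with `g ∈ ℓ²(G)` gives a vector of norm at most
`‖T‖ ‖g‖`. Propagation passes to the limit, since the kernel of `T` vanishes `ω`-eventually once
the distances converge to some `r > R`.
-/

noncomputable section
open scoped ENNReal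
open Filter

/-- The Hilbert space ℓ²(X). -/
abbrev L2 (X : Type*) := lp (fun _ : X => ℂ) 2

/-- The Dirac function δ_x ∈ ℓ²(X). -/
noncomputable def dirac {X : Type*} (x : X) : L2 X := by
  classical exact lp.single 2 x 1

open scoped ComplexConjugate NNReal Topology

section Dirac

variable {X : Type*}

lemma inner_dirac_left (x : X) (f : L2 X) : inner ℂ (dirac x) f = f x := by
  classical
  simp [dirac, lp.inner_single_left, RCLike.inner_apply]

lemma orthonormal_dirac : Orthonormal ℂ (dirac : X → L2 X) := by
  classical
  rw [orthonormal_iff_ite]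
  intro x y
  rw [inner_dirac_left]
  simp [dirac, Pi.single_apply]

lemma norm_sum_smul_dirac {ι : Type*} {s : Finset ι} {u : ι → X} (hu : Set.InjOn u s)
    (a : ι → ℂ) : ‖∑ x ∈ s, a x • dirac (u x)‖ = √(∑ x ∈ s, ‖a x‖ ^ 2) := by
  have hv := (orthonormal_dirac.comp (fun x : s => u x)
    fun x y h => Subtype.ext (hu x.2 y.2 h)).inner_sum (fun x => a x) (fun x => a x) .univ
  simp only [Function.comp_apply] at hv
  rw [@norm_eq_sqrt_re_inner ℂ, ← s.sum_coe_sort, ← s.sum_coe_sort, hv]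
  simp [RCLike.conj_mul, ← Complex.ofReal_pow]

def opKernel (T : L2 X →L[ℂ] L2 X) (x y : X) : ℂ := inner ℂ (dirac x) (T (dirac y))

lemma norm_opKernel_le (T : L2 X →L[ℂ] L2 X) (x y : X) : ‖opKernel T x y‖ ≤ ‖T‖ := by
  calc ‖opKernel T x y‖ ≤ ‖dirac x‖ * ‖T (dirac y)‖ := norm_inner_le_norm _ _
    _ ≤ 1 * (‖T‖ * 1) := by
        gcongr
        · exact (orthonormal_dirac.1 x).le
        · exact T.le_opNorm_of_le (orthonormal_dirac.1 y).le
    _ = ‖T‖ := by ring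

lemma norm_sum_sum_opKernel_le (T : L2 X →L[ℂ] L2 X) {ι : Type*} {s t : Finset ι} {u v : ι → X}
    (hu : Set.InjOn u s) (hv : Set.InjOn v t) (a b : ι → ℂ) :
    ‖∑ x ∈ s, ∑ y ∈ t, conj (a x) * opKernel T (u x) (v y) * b y‖ ≤
      ‖T‖ * √(∑ x ∈ s, ‖a x‖ ^ 2) * √(∑ y ∈ t, ‖b y‖ ^ 2) := by
  have hsum : ∑ x ∈ s, ∑ y ∈ t, conj (a x) * opKernel T (u x) (v y) * b y =
      inner ℂ (∑ x ∈ s, a x • dirac (u x)) (T (∑ y ∈ t, b y • dirac (v y))) := by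
    rw [map_sum, sum_inner]
    refine Finset.sum_congr rfl fun x _ => ?_
    rw [inner_smul_left, inner_sum, Finset.mul_sum]
    refine Finset.sum_congr rfl fun y _ => ?_
    rw [map_smul, inner_smul_right, opKernel]
    ring
  rw [hsum, ← norm_sum_smul_dirac hu, ← norm_sum_smul_dirac hv]
  calc _ ≤ ‖∑ x ∈ s, a x • dirac (u x)‖ * ‖T (∑ y ∈ t, b y • dirac (v y))‖ :=
        norm_inner_le_norm _ _
    _ ≤ ‖∑ x ∈ s, a x • dirac (u x)‖ * (‖T‖ * ‖∑ y ∈ t, b y • dirac (v y)‖) := by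
        gcongr
        exact T.le_opNorm _
    _ = _ := by ring

end Dirac

lemma le_sq_of_le_mul_sqrt {A B : ℝ} (hA : 0 ≤ A) (h : A ≤ B * √A) : A ≤ B ^ 2 := by
  nlinarith [Real.sq_sqrt hA, Real.sqrt_nonneg A, sq_nonneg (B - √A)]

lemma sum_conj_mul_self {ι : Type*} (s : Finset ι) (c : ι → ℂ) :
    ∑ x ∈ s, conj (c x) * c x = ((∑ x ∈ s, ‖c x‖ ^ 2 : ℝ) : ℂ) := by
  push_cast
  exact Finset.sum_congr rfl fun x _ => RCLike.conj_mul (c x)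

def KernelBoundedBy {ι : Type*} (κ : ι → ι → ℂ) (C : ℝ≥0) : Prop :=
  ∀ (s t : Finset ι) (a b : ι → ℂ), ‖∑ x ∈ s, ∑ y ∈ t, conj (a x) * κ x y * b y‖ ≤
    C * √(∑ x ∈ s, ‖a x‖ ^ 2) * √(∑ y ∈ t, ‖b y‖ ^ 2)

namespace KernelBoundedBy

variable {ι : Type*} {κ : ι → ι → ℂ} {C : ℝ≥0}

lemma sum_sq_norm_row_le (h : KernelBoundedBy κ C) (x : ι) (t : Finset ι) :
    ∑ y ∈ t, ‖κ x y‖ ^ 2 ≤ (C : ℝ) ^ 2 := by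
  have hA : 0 ≤ ∑ y ∈ t, ‖κ x y‖ ^ 2 := by positivity
  refine le_sq_of_le_mul_sqrt hA ?_
  have := h {x} t 1 (fun y => conj (κ x y))
  simp only [Finset.sum_singleton, Pi.one_apply, map_one, one_mul, norm_one, one_pow,
    Real.sqrt_one, mul_one, RCLike.norm_conj] at this
  rwa [Finset.sum_congr rfl fun y _ => mul_comm _ _, sum_conj_mul_self, Complex.norm_real,
    Real.norm_of_nonneg hA] at this

lemma memℓp_row (h : KernelBoundedBy κ C) (x : ι) : Memℓp (fun y => conj (κ x y)) 2 :=
  memℓp_gen' (C := C ^ 2) fun t => by simpa using h.sum_sq_norm_row_le x t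

def row (h : KernelBoundedBy κ C) (x : ι) : L2 ι := ⟨_, h.memℓp_row x⟩

lemma hasSum_mul_inner_row (h : KernelBoundedBy κ C) (x : ι) (g : L2 ι) :
    HasSum (fun y => κ x y * g y) (inner ℂ (h.row x) g) := by
  simpa [row, RCLike.inner_apply, mul_comm] using lp.hasSum_inner (𝕜 := ℂ) (h.row x) g

lemma sum_sq_norm_inner_row_le (h : KernelBoundedBy κ C) (g : L2 ι) (s : Finset ι) :
    ∑ x ∈ s, ‖inner ℂ (h.row x) g‖ ^ 2 ≤ (C * ‖g‖) ^ 2 := by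
  set c := fun x => inner ℂ (h.row x) g
  have hA : 0 ≤ ∑ x ∈ s, ‖c x‖ ^ 2 := by positivity
  refine le_sq_of_le_mul_sqrt hA ?_
  have hsum : HasSum (fun y => ∑ x ∈ s, conj (c x) * κ x y * g y)
      ((∑ x ∈ s, ‖c x‖ ^ 2 : ℝ) : ℂ) := by
    rw [← sum_conj_mul_self]
    exact hasSum_sum fun x _ => by
      simpa only [mul_assoc] using (h.hasSum_mul_inner_row x g).mul_left (conj (c x))
  have hpartial (t : Finset ι) :
      ‖∑ y ∈ t, ∑ x ∈ s, conj (c x) * κ x y * g y‖ ≤ C * ‖g‖ * √(∑ x ∈ s, ‖c x‖ ^ 2) := by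
    have hg : √(∑ y ∈ t, ‖g y‖ ^ 2) ≤ ‖g‖ := by
      rw [Real.sqrt_le_left (norm_nonneg g)]
      simpa using lp.sum_rpow_le_norm_rpow (by norm_num) g t
    calc _ ≤ C * √(∑ x ∈ s, ‖c x‖ ^ 2) * √(∑ y ∈ t, ‖g y‖ ^ 2) := by
          rw [Finset.sum_comm]; exact h s t c g
      _ ≤ C * √(∑ x ∈ s, ‖c x‖ ^ 2) * ‖g‖ := by gcongr
      _ = _ := by ring
  simpa only [Complex.norm_real, Real.norm_of_nonneg hA] using
    le_of_tendsto hsum.norm (Eventually.of_forall hpartial)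

lemma memℓp_inner_row (h : KernelBoundedBy κ C) (g : L2 ι) :
    Memℓp (fun x => inner ℂ (h.row x) g) 2 :=
  memℓp_gen' (C := (C * ‖g‖) ^ 2) fun s => by simpa using h.sum_sq_norm_inner_row_le g s

def toCLM (h : KernelBoundedBy κ C) : L2 ι →L[ℂ] L2 ι :=
  LinearMap.mkContinuous
    { toFun g := ⟨_, h.memℓp_inner_row g⟩
      map_add' g g' := lp.ext <| funext fun x => inner_add_right _ _ _
      map_smul' a g := lp.ext <| funext fun x => inner_smul_right _ _ _ }
    C fun g => lp.norm_le_of_forall_sum_le (by norm_num) (by positivity) fun s => by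
      simpa using h.sum_sq_norm_inner_row_le g s

lemma inner_dirac_toCLM (h : KernelBoundedBy κ C) (x y : ι) :
    inner ℂ (dirac x) (h.toCLM (dirac y)) = κ x y := by
  rw [inner_dirac_left]
  show inner ℂ (h.row x) (dirac y) = κ x y
  rw [← inner_conj_symm, inner_dirac_left]
  simp [row]

end KernelBoundedBy

lemma Ultrafilter.exists_tendsto_of_norm_le {I E : Type*} [NormedAddCommGroup E] [ProperSpace E]
    (ω : Ultrafilter I) {f : I → E} {C : ℝ} (hf : ∀ i, ‖f i‖ ≤ C) :
    ∃ c, Tendsto f ω (𝓝 c) := by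
  obtain ⟨c, -, hc⟩ := isCompact_iff_ultrafilter_le_nhds'.1 (isCompact_closedBall (0 : E) C)
    (ω.map f) (Ultrafilter.mem_map.2 (univ_mem' fun i => mem_closedBall_zero_iff.2 (hf i)))
  exact ⟨c, hc⟩

lemma Ultrafilter.eventually_injOn_out {I X ι : Type*} (ω : Ultrafilter I)
    {u : ι → (ω : Filter I).Germ X} (hu : Function.Injective u) (s : Finset ι) :
    ∀ᶠ i in (ω : Filter I), Set.InjOn (fun x => Quotient.out (u x) i) s := by
  have hne (x y : ι) (hxy : x ≠ y) : ∀ᶠ i in (ω : Filter I),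
      Quotient.out (u x) i ≠ Quotient.out (u y) i := by
    refine ω.eventually_not.2 fun h => hxy (hu ?_)
    rw [← Quotient.out_eq' (u x), ← Quotient.out_eq' (u y)]
    exact Germ.coe_eq.2 h
  have hall : ∀ᶠ i in (ω : Filter I), ∀ x ∈ s, ∀ y ∈ s, x ≠ y →
      Quotient.out (u x) i ≠ Quotient.out (u y) i :=
    (eventually_all_finset s).2 fun x _ => (eventually_all_finset s).2 fun y _ =>
      eventually_imp_distrib_left.2 (hne x y)
  filter_upwards [hall] with i hi x hx y hy using not_imp_not.1 (hi x hx y hy)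

section LimitKernel

variable {X I : Type*} (ω : Ultrafilter I) (T : L2 X →L[ℂ] L2 X)

/-- The kernel `k_{T_G}` of the paper, defined on all of `X^ω`. -/
def limitKernel (x y : (ω : Filter I).Germ X) : ℂ :=
  Quotient.liftOn₂' x y (fun x y => limUnder ω fun i => opKernel T (x i) (y i))
    fun _ _ _ _ hx hy => by
      unfold limUnder
      congr 1
      refine Filter.map_congr ?_
      filter_upwards [hx, hy] with i hxi hyi
      rw [hxi, hyi]

lemma tendsto_limitKernel (x y : I → X) :
    Tendsto (fun i => opKernel T (x i) (y i)) ω (𝓝 (limitKernel ω T x y)) :=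
  tendsto_nhds_limUnder (ω.exists_tendsto_of_norm_le fun _ => norm_opKernel_le T _ _)

lemma kernelBoundedBy_limitKernel {ι : Type*} {u : ι → (ω : Filter I).Germ X}
    (hu : Function.Injective u) :
    KernelBoundedBy (fun x y => limitKernel ω T (u x) (u y)) ‖T‖₊ := by
  intro s t a b
  let rep x := Quotient.out (u x)
  have hrep (x : ι) : ((rep x : I → X) : (ω : Filter I).Germ X) = u x := Quotient.out_eq' _
  have hlim : Tendsto
      (fun i => ∑ x ∈ s, ∑ y ∈ t, conj (a x) * opKernel T (rep x i) (rep y i) * b y) ω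
      (𝓝 (∑ x ∈ s, ∑ y ∈ t, conj (a x) * limitKernel ω T (u x) (u y) * b y)) := by
    refine tendsto_finsetSum _ fun x _ => tendsto_finsetSum _ fun y _ => ?_
    have := tendsto_limitKernel ω T (rep x) (rep y)
    rw [hrep, hrep] at this
    exact (this.const_mul _).mul_const _
  refine le_of_tendsto hlim.norm ?_
  filter_upwards [ω.eventually_injOn_out hu s, ω.eventually_injOn_out hu t] with i hs ht
  exact norm_sum_sum_opKernel_le T hs ht a b

lemma limitKernel_eq_zero_of_lt [Dist X] {R : ℝ} (hT : ∀ x y, R < dist x y → opKernel T x y = 0)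
    {x y : I → X} {r : ℝ} (hr : Tendsto (fun i => dist (x i) (y i)) ω (𝓝 r)) (hRr : R < r) :
    limitKernel ω T x y = 0 := by
  refine tendsto_nhds_unique (tendsto_limitKernel ω T x y) (tendsto_const_nhds.congr' ?_)
  filter_upwards [hr.eventually (eventually_gt_nhds hRr)] with i hi
  exact (hT _ _ hi).symm

end LimitKernel

theorem limit_operator_finite_propagation_general {X I : Type*} [MetricSpace X] (ω : Ultrafilter I)
    (T : L2 X →L[ℂ] L2 X) (R : ℝ)
    (hT : ∀ x y : X, R < dist x y → @inner ℂ _ _ (dirac x) (T (dirac y)) = 0)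
    (G : Set ((ω : Filter I).Germ X)) :
    ∃ S : lp (fun _ : G => ℂ) 2 →L[ℂ] lp (fun _ : G => ℂ) 2,
      -- the kernel of S is the ω-limit of the kernel of T
      (∀ (x y : I → X) (hx : (x : (ω : Filter I).Germ X) ∈ G)
          (hy : (y : (ω : Filter I).Germ X) ∈ G),
        Filter.Tendsto (fun i => @inner ℂ _ _ (dirac (x i)) (T (dirac (y i))))
          (ω : Filter I)
          (nhds (@inner ℂ _ _ (dirac (⟨_, hx⟩ : G)) (S (dirac (⟨_, hy⟩ : G)))))) ∧
      -- S has propagation at most R with respect to st ∘ d^ω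
      (∀ (x y : I → X) (hx : (x : (ω : Filter I).Germ X) ∈ G)
          (hy : (y : (ω : Filter I).Germ X) ∈ G) (r : ℝ),
        Filter.Tendsto (fun i => dist (x i) (y i)) (ω : Filter I) (nhds r) → R < r →
          @inner ℂ _ _ (dirac (⟨_, hx⟩ : G)) (S (dirac (⟨_, hy⟩ : G))) = 0) := by
  have hS := kernelBoundedBy_limitKernel ω T (Subtype.val_injective (p := (· ∈ G)))
  refine ⟨hS.toCLM, fun x y hx hy => ?_, fun x y hx hy r hr hRr => ?_⟩
  · rw [hS.inner_dirac_toCLM]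
    exact tendsto_limitKernel ω T x y
  · rw [hS.inner_dirac_toCLM]
    exact limitKernel_eq_zero_of_lt ω T hT hr hRr

/-- If T ∈ B(ℓ²(X)) has propagation at most R on a uniformly locally finite
metric space X, then on every galaxy G of X^ω the limit operator T_G, whose kernel is the
ω-limit of the kernel of T, is a well-defined bounded operator of propagation at most R
for the standard-part pseudo-metric. -/
theorem limit_operator_finite_propagation {X I : Type*} [MetricSpace X] (ω : Ultrafilter I)
    (hULF : ∀ R : ℝ, 0 < R → ∃ N : ℕ, ∀ x : X,
      (Metric.closedBall x R).Finite ∧ (Metric.closedBall x R).ncard ≤ N)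
    (T : L2 X →L[ℂ] L2 X) (R : ℝ) (hR : 0 ≤ R)
    (hT : ∀ x y : X, R < dist x y → @inner ℂ _ _ (dirac x) (T (dirac y)) = 0)
    (G : Set ((ω : Filter I).Germ X))
    (hG : ∀ x ∈ G, ∀ y ∈ G, ∃ c : ℝ,
      Filter.Germ.map₂ dist x y ≤ ((fun _ => c : I → ℝ) : (ω : Filter I).Germ ℝ)) :
    ∃ S : lp (fun _ : G => ℂ) 2 →L[ℂ] lp (fun _ : G => ℂ) 2,
      -- the kernel of S is the ω-limit of the kernel of T
      (∀ (x y : I → X) (hx : (x : (ω : Filter I).Germ X) ∈ G)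
          (hy : (y : (ω : Filter I).Germ X) ∈ G),
        Filter.Tendsto (fun i => @inner ℂ _ _ (dirac (x i)) (T (dirac (y i))))
          (ω : Filter I)
          (nhds (@inner ℂ _ _ (dirac (⟨_, hx⟩ : G)) (S (dirac (⟨_, hy⟩ : G)))))) ∧
      -- S has propagation at most R with respect to st ∘ d^ω
      (∀ (x y : I → X) (hx : (x : (ω : Filter I).Germ X) ∈ G)
          (hy : (y : (ω : Filter I).Germ X) ∈ G) (r : ℝ),
        Filter.Tendsto (fun i => dist (x i) (y i)) (ω : Filter I) (nhds r) → R < r →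
          @inner ℂ _ _ (dirac (⟨_, hx⟩ : G)) (S (dirac (⟨_, hy⟩ : G))) = 0) :=
  limit_operator_finite_propagation_general ω T R hT G
end
end
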